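/- The two-dimensional semi-mirror shift S_semi-mirror is not sofic. -/
import Mathlib


/-- A cell of the two-dimensional grid `ℤ²`. -/
abbrev Cell : Type := ℤ × ℤ

/-- A configuration over the alphabet `A` is a map `ℤ² → A`. -/
abbrev Config (A : Type) : Type := Cell → A

/-- The translateCfg of a configuration `x` by `u` is `i ↦ x (i + u)`. -/
def translateCfg {A : Type} (u : Cell) (x : Config A) : Config A := fun i => x (i + u)

/-- The product topology on `A^(ℤ²)`, `A` being given the discrete topology. -/
def configTop (A : Type) : TopologicalSpace (Config A) :=
  @Pi.topologicalSpace Cell (fun _ => A) (fun _ => ⊥)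

/-- A shift (space) over `A`: a set of configurations invariant under all translations
and closed in the product topology (`A` discrete). -/
def IsShiftSpace {A : Type} (S : Set (Config A)) : Prop :=
  (∀ (u : Cell) (x : Config A), x ∈ S → translateCfg u x ∈ S) ∧
    @IsClosed (Config A) (configTop A) S

/-- A finite pattern: a function `P : F → A` with `F ⊆ ℤ²` finite. -/
structure Pattern (A : Type) where
  supp : Finset Cell
  val : supp → A

/-- `P` occurs in `x` if some translateCfg of `x` agrees with `P` on its support. -/
def Pattern.OccursIn {A : Type} (P : Pattern A) (x : Config A) : Prop :=
  ∃ u : Cell, ∀ i : P.supp, x ((i : Cell) + u) = P.val i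

/-- The shift defined by a set `F` of forbidden finite patterns. -/
def shiftOf {A : Type} (F : Set (Pattern A)) : Set (Config A) :=
  { x | ∀ P ∈ F, ¬ P.OccursIn x }

/-- A shift of finite type: a shift definable by a finite set of forbidden finite patterns. -/
def IsSFT {A : Type} (S : Set (Config A)) : Prop :=
  ∃ F : Set (Pattern A), F.Finite ∧ S = shiftOf F

/-- A sofic shift: a coordinatewise projection of a shift of finite type
over some finite alphabet. -/
def IsSofic {A : Type} (S : Set (Config A)) : Prop :=
  ∃ (A' : Type) (_ : Fintype A') (S' : Set (Config A')) (π : A' → A),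
    IsSFT S' ∧ S = (fun y => π ∘ y) '' S'

/-- The cell of `ℤ²` corresponding to an index in the `n × n` square `{0,…,n−1}²`. -/
def toCell {n : ℕ} (q : Fin n × Fin n) : Cell := ((q.1 : ℤ), (q.2 : ℤ))

/-- An `n × n` square pattern, i.e. a pattern with support `B_n = {0,…,n−1}²`. -/
abbrev SqPattern (A : Type) (n : ℕ) : Type := Fin n × Fin n → A

/-- An `n × n` square pattern occurs in `x` if some translateCfg of `x` agrees with it. -/
def SqOccursIn {A : Type} {n : ℕ} (P : SqPattern A n) (x : Config A) : Prop :=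
  ∃ u : Cell, ∀ q : Fin n × Fin n, x (toCell q + u) = P q

/-- A pattern is globally admissible for `S` if it occurs in some configuration of `S`. -/
def SqGloballyAdmissible {A : Type} {n : ℕ} (S : Set (Config A)) (P : SqPattern A n) : Prop :=
  ∃ x ∈ S, SqOccursIn P x

/-- Membership in the square `B_n = {0,…,n−1}² ⊆ ℤ²`. -/
def inBn (n : ℕ) (p : Cell) : Prop :=
  0 ≤ p.1 ∧ p.1 < (n : ℤ) ∧ 0 ≤ p.2 ∧ p.2 < (n : ℤ)

instance (n : ℕ) (p : Cell) : Decidable (inBn n p) := by unfold inBn; infer_instance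

/-- A pattern on `F_n = ℤ² \ B_n`, the complement of the `n × n` square. -/
abbrev ExtPattern (A : Type) (n : ℕ) : Type := { p : Cell // ¬ inBn n p } → A

/-- The configuration `P ∪ Q`, equal to `P` on `B_n` and to `Q` on `F_n`. -/
def glue {A : Type} {n : ℕ} (P : SqPattern A n) (Q : ExtPattern A n) : Config A :=
  fun p =>
    if h : inBn n p then
      P (⟨p.1.toNat, by unfold inBn at h; omega⟩, ⟨p.2.toNat, by unfold inBn at h; omega⟩)
    else Q ⟨p, h⟩

/-- The extension set `Ext_S(P) = {Q : F_n → A | P ∪ Q ∈ S}`. -/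
def ExtSet {A : Type} {n : ℕ} (S : Set (Config A)) (P : SqPattern A n) :
    Set (ExtPattern A n) :=
  { Q | glue P Q ∈ S }

/-- A finite sequence of sets is an increasing-union chain if no set is contained in
the union of the preceding ones. -/
def IncreasingUnionChain {β : Type} {m : ℕ} (T : Fin m → Set β) : Prop :=
  ∀ i : Fin m, ¬ T i ⊆ ⋃ (j : Fin m) (_ : j < i), T j

/-- The three-letter alphabet of the semi-mirror shift. -/
inductive Letter : Type
  | black
  | white
  | red
deriving DecidableEq

/-- The two-dimensional semi-mirror shift: configurations with no red cell, or configurations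
with a single infinite horizontal red row at height `j₀` such that whenever the cell at
distance `k` below the red row is black, the symmetric cell above the red row is black too. -/
def semiMirrorShift : Set (Config Letter) :=
  { x | (∀ p : Cell, x p ≠ Letter.red) ∨
        (∃ j0 : ℤ, (∀ i j : ℤ, x (i, j) = Letter.red ↔ j = j0) ∧
          (∀ (i k : ℤ), 1 ≤ k → x (i, j0 - k) = Letter.black → x (i, j0 + k) = Letter.black)) }
/-- The index in `Fin n` of an integer in `[0, n)`. -/
def idx (n : ℕ) (i : ℤ) (h : 0 ≤ i ∧ i < (n : ℤ)) : Fin n := ⟨i.toNat, by omega⟩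

lemma idx_coe {n : ℕ} (i : Fin n) (h : 0 ≤ ((i : ℕ) : ℤ) ∧ ((i : ℕ) : ℤ) < (n : ℤ)) :
    idx n ((i : ℕ) : ℤ) h = i := by
  apply Fin.ext; simp [idx]

/-- The test configuration: black cells at `(i, g i)` below a red row at height `n`,
and black cells at the mirror positions `(i, 2n - f i)` above it. -/
def Xcfg (n : ℕ) (f g : Fin n → Fin n) : Config Letter := fun p =>
  if p.2 = (n : ℤ) then Letter.red
  else if h : 0 ≤ p.1 ∧ p.1 < (n : ℤ) ∧ 0 ≤ p.2 ∧ p.2 < (n : ℤ) then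
    (if ((g (idx n p.1 ⟨h.1, h.2.1⟩) : ℕ) : ℤ) = p.2 then Letter.black else Letter.white)
  else if h2 : 0 ≤ p.1 ∧ p.1 < (n : ℤ) ∧ (n : ℤ) < p.2 ∧ p.2 ≤ 2 * (n : ℤ) then
    (if 2 * (n : ℤ) - ((f (idx n p.1 ⟨h2.1, h2.2.1⟩) : ℕ) : ℤ) = p.2 then Letter.black
     else Letter.white)
  else Letter.white

lemma Xcfg_mem (n : ℕ) (f : Fin n → Fin n) : Xcfg n f f ∈ semiMirrorShift := by
  right
  refine ⟨(n : ℤ), fun i j => ?_, fun i k hk hb => ?_⟩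
  · unfold Xcfg
    dsimp only
    split_ifs with h1 h2 <;> simp_all
  · unfold Xcfg at hb ⊢
    dsimp only at hb ⊢
    rw [if_neg (by omega)] at hb
    by_cases hbelow : 0 ≤ i ∧ i < (n : ℤ) ∧ 0 ≤ (n : ℤ) - k ∧ (n : ℤ) - k < (n : ℤ)
    · rw [dif_pos hbelow] at hb
      split_ifs at hb with hcond
      · have hflt : (f (idx n i ⟨hbelow.1, hbelow.2.1⟩) : ℕ) < n := (f _).isLt
        rw [if_neg (by omega), dif_neg (by omega),
          dif_pos (show 0 ≤ i ∧ i < (n : ℤ) ∧ (n : ℤ) < (n : ℤ) + k ∧ (n : ℤ) + k ≤ 2 * (n : ℤ)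
            from ⟨hbelow.1, hbelow.2.1, by omega, by omega⟩)]
        rw [if_pos (by omega)]
    · rw [dif_neg hbelow, dif_neg (by omega)] at hb
      exact absurd hb (by simp)

lemma Xcfg_eval_below (n : ℕ) (f g : Fin n → Fin n) (i : Fin n) (j : ℤ)
    (hj : 0 ≤ j ∧ j < (n : ℤ)) :
    Xcfg n f g (((i : ℕ) : ℤ), j) = if ((g i : ℕ) : ℤ) = j then Letter.black else Letter.white := by
  unfold Xcfg
  dsimp only
  rw [if_neg (by omega), dif_pos (show 0 ≤ ((i:ℕ):ℤ) ∧ ((i:ℕ):ℤ) < (n:ℤ) ∧ 0 ≤ j ∧ j < (n:ℤ)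
    from ⟨by positivity, by exact_mod_cast i.isLt, hj.1, hj.2⟩), idx_coe]

lemma Xcfg_eval_above (n : ℕ) (f g : Fin n → Fin n) (i : Fin n) (j : ℤ)
    (hj : (n : ℤ) < j ∧ j ≤ 2 * (n : ℤ)) :
    Xcfg n f g (((i : ℕ) : ℤ), j) =
      if 2 * (n : ℤ) - ((f i : ℕ) : ℤ) = j then Letter.black else Letter.white := by
  unfold Xcfg
  dsimp only
  rw [if_neg (by omega), dif_neg (by omega),
    dif_pos (show 0 ≤ ((i:ℕ):ℤ) ∧ ((i:ℕ):ℤ) < (n:ℤ) ∧ (n:ℤ) < j ∧ j ≤ 2*(n:ℤ)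
      from ⟨by positivity, by exact_mod_cast i.isLt, hj.1, hj.2⟩), idx_coe]

lemma Xcfg_mem_eq {n : ℕ} {f g : Fin n → Fin n}
    (h : Xcfg n f g ∈ semiMirrorShift) : f = g := by
  by_contra hne
  obtain ⟨i, hi⟩ := Function.ne_iff.mp hne
  have hn : 0 < n := i.pos
  have hred : Xcfg n f g (0, (n : ℤ)) = Letter.red := by
    unfold Xcfg; dsimp only; rw [if_pos rfl]
  rcases h with h | ⟨j0, hr, hm⟩
  · exact h _ hred
  · have hj0 : (n : ℤ) = j0 := (hr 0 (n : ℤ)).mp hred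
    subst hj0
    set b : ℕ := (g i : ℕ) with hb
    have hblt : b < n := (g i).isLt
    have hbelow : Xcfg n f g (((i : ℕ) : ℤ), (b : ℤ)) = Letter.black := by
      rw [Xcfg_eval_below n f g i _ ⟨by positivity, by exact_mod_cast hblt⟩, if_pos rfl]
    have habove := hm ((i : ℕ) : ℤ) ((n : ℤ) - (b : ℤ)) (by omega)
      (by rw [show (n:ℤ) - ((n:ℤ) - (b:ℤ)) = (b:ℤ) by ring]; exact hbelow)
    rw [show (n:ℤ) + ((n:ℤ) - (b:ℤ)) = 2*(n:ℤ) - (b:ℤ) by ring] at habove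
    rw [Xcfg_eval_above n f g i _ ⟨by omega, by omega⟩] at habove
    have hfib : ((f i : ℕ) : ℤ) ≠ (b : ℤ) := by
      simp only [Ne, Int.natCast_inj]
      intro hE
      exact hi (Fin.ext hE)
    rw [if_neg (by omega)] at habove
    exact absurd habove (by simp)

/-- The boundary annulus of thickness `t` inside the square `B_n`. -/
def ann (n t : ℕ) : Finset Cell :=
  ((Finset.range t ×ˢ Finset.range n).image fun q => (((q.1 : ℕ) : ℤ), ((q.2 : ℕ) : ℤ))) ∪
  ((Finset.range t ×ˢ Finset.range n).image fun q => ((n : ℤ) - 1 - (q.1 : ℤ), ((q.2 : ℕ) : ℤ))) ∪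
  ((Finset.range n ×ˢ Finset.range t).image fun q => (((q.1 : ℕ) : ℤ), ((q.2 : ℕ) : ℤ))) ∪
  ((Finset.range n ×ˢ Finset.range t).image fun q => (((q.1 : ℕ) : ℤ), (n : ℤ) - 1 - (q.2 : ℤ)))

lemma ann_card (n t : ℕ) : (ann n t).card ≤ 4 * (t * n) := by
  have h1 := Finset.card_image_le (s := Finset.range t ×ˢ Finset.range n)
    (f := fun q : ℕ × ℕ => (((q.1 : ℕ) : ℤ), ((q.2 : ℕ) : ℤ)))
  have h2 := Finset.card_image_le (s := Finset.range t ×ˢ Finset.range n)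
    (f := fun q : ℕ × ℕ => ((n : ℤ) - 1 - (q.1 : ℤ), ((q.2 : ℕ) : ℤ)))
  have h3 := Finset.card_image_le (s := Finset.range n ×ˢ Finset.range t)
    (f := fun q : ℕ × ℕ => (((q.1 : ℕ) : ℤ), ((q.2 : ℕ) : ℤ)))
  have h4 := Finset.card_image_le (s := Finset.range n ×ˢ Finset.range t)
    (f := fun q : ℕ × ℕ => (((q.1 : ℕ) : ℤ), (n : ℤ) - 1 - (q.2 : ℤ)))
  simp only [Finset.card_product, Finset.card_range] at h1 h2 h3 h4
  rw [Nat.mul_comm n t] at h3 h4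
  calc (ann n t).card ≤ _ := Finset.card_union_le _ _
    _ ≤ _ := Nat.add_le_add (Finset.card_union_le _ _) le_rfl
    _ ≤ _ := Nat.add_le_add (Nat.add_le_add (Finset.card_union_le _ _) le_rfl) le_rfl
    _ ≤ 4 * (t * n) := by omega

lemma mem_ann {n t : ℕ} {p : Cell}
    (hB : 0 ≤ p.1 ∧ p.1 < (n : ℤ) ∧ 0 ≤ p.2 ∧ p.2 < (n : ℤ))
    (hnear : p.1 < (t : ℤ) ∨ (n : ℤ) - t ≤ p.1 ∨ p.2 < (t : ℤ) ∨ (n : ℤ) - t ≤ p.2) :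
    p ∈ ann n t := by
  unfold ann
  rcases hnear with h | h | h | h
  · apply Finset.mem_union_left; apply Finset.mem_union_left; apply Finset.mem_union_left
    apply Finset.mem_image.mpr
    exact ⟨(p.1.toNat, p.2.toNat), by simp [Finset.mem_product]; omega,
      by simp [Prod.ext_iff]; omega⟩
  · apply Finset.mem_union_left; apply Finset.mem_union_left; apply Finset.mem_union_right
    apply Finset.mem_image.mpr
    exact ⟨(((n : ℤ) - 1 - p.1).toNat, p.2.toNat), by simp [Finset.mem_product]; omega,
      by simp [Prod.ext_iff]; omega⟩
  · apply Finset.mem_union_left; apply Finset.mem_union_right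
    apply Finset.mem_image.mpr
    exact ⟨(p.1.toNat, p.2.toNat), by simp [Finset.mem_product]; omega,
      by simp [Prod.ext_iff]; omega⟩
  · apply Finset.mem_union_right
    apply Finset.mem_image.mpr
    exact ⟨(p.1.toNat, ((n : ℤ) - 1 - p.2).toNat), by simp [Finset.mem_product]; omega,
      by simp [Prod.ext_iff]; omega⟩

/-- Swapping the interior of `B_n` between two SFT configurations that agree on the
boundary annulus of thickness `2r+1` stays in the SFT. -/
lemma swap_mem {A' : Type} {F : Set (Pattern A')} {r n : ℕ}
    (hr : ∀ P ∈ F, ∀ p ∈ P.supp, p.1.natAbs ≤ r ∧ p.2.natAbs ≤ r)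
    {yf yg : Config A'} (hyf : yf ∈ shiftOf F) (hyg : yg ∈ shiftOf F)
    (hagree : ∀ p ∈ ann n (2 * r + 1), yf p = yg p) :
    (fun p => if inBn n p then yg p else yf p) ∈ shiftOf F := by
  intro P hP
  rintro ⟨u, hu⟩
  by_cases hdeep : ∃ ic : P.supp, ((2 * r + 1 : ℕ) : ℤ) ≤ (ic : Cell).1 + u.1 ∧
      (ic : Cell).1 + u.1 < (n : ℤ) - (2 * r + 1 : ℕ) ∧
      ((2 * r + 1 : ℕ) : ℤ) ≤ (ic : Cell).2 + u.2 ∧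
      (ic : Cell).2 + u.2 < (n : ℤ) - (2 * r + 1 : ℕ)
  · obtain ⟨ic, hic⟩ := hdeep
    apply hyg P hP
    refine ⟨u, fun j => ?_⟩
    have hj : (if inBn n ((j : Cell) + u) then yg ((j : Cell) + u) else yf ((j : Cell) + u))
        = P.val j := hu j
    have hi1 := hr P hP (ic : Cell) ic.2
    have hj1 := hr P hP (j : Cell) j.2
    have hjb : inBn n ((j : Cell) + u) := by
      unfold inBn
      simp only [Prod.fst_add, Prod.snd_add]
      omega
    rwa [if_pos hjb] at hj
  · apply hyf P hP
    refine ⟨u, fun j => ?_⟩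
    have hj : (if inBn n ((j : Cell) + u) then yg ((j : Cell) + u) else yf ((j : Cell) + u))
        = P.val j := hu j
    by_cases hjb : inBn n ((j : Cell) + u)
    · rw [if_pos hjb] at hj
      have hnd : ¬ (((2 * r + 1 : ℕ) : ℤ) ≤ (j : Cell).1 + u.1 ∧
          (j : Cell).1 + u.1 < (n : ℤ) - (2 * r + 1 : ℕ) ∧
          ((2 * r + 1 : ℕ) : ℤ) ≤ (j : Cell).2 + u.2 ∧
          (j : Cell).2 + u.2 < (n : ℤ) - (2 * r + 1 : ℕ)) := fun h => hdeep ⟨j, h⟩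
      have hjB : 0 ≤ ((j : Cell) + u).1 ∧ ((j : Cell) + u).1 < (n : ℤ) ∧
          0 ≤ ((j : Cell) + u).2 ∧ ((j : Cell) + u).2 < (n : ℤ) := hjb
      have hmem : ((j : Cell) + u) ∈ ann n (2 * r + 1) := by
        apply mem_ann hjB
        simp only [Prod.fst_add, Prod.snd_add] at hjB ⊢
        omega
      rw [← hagree _ hmem] at hj
      exact hj
    · rwa [if_neg hjb] at hj

lemma Xcfg_eq_inB {n : ℕ} (f f' g : Fin n → Fin n) {p : Cell} (hp : inBn n p) :
    Xcfg n f g p = Xcfg n f' g p := by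
  have hp' : 0 ≤ p.1 ∧ p.1 < (n : ℤ) ∧ 0 ≤ p.2 ∧ p.2 < (n : ℤ) := hp
  unfold Xcfg
  rw [if_neg (by omega), if_neg (by omega), dif_pos hp', dif_pos hp']

lemma Xcfg_eq_outB {n : ℕ} (f g g' : Fin n → Fin n) {p : Cell} (hp : ¬ inBn n p) :
    Xcfg n f g p = Xcfg n f g' p := by
  have hp' : ¬ (0 ≤ p.1 ∧ p.1 < (n : ℤ) ∧ 0 ≤ p.2 ∧ p.2 < (n : ℤ)) := fun h => hp h
  unfold Xcfg
  rw [dif_neg hp', dif_neg hp']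

/-- The two-dimensional semi-mirror shift is not sofic. -/
theorem semiMirrorShift_not_sofic : ¬ IsSofic semiMirrorShift := by
  rintro ⟨A', hA, S', π, ⟨F, hFfin, rfl⟩, himg⟩
  haveI := hA
  classical
  -- radius bound for the forbidden patterns
  set r : ℕ := hFfin.toFinset.sup (fun P => P.supp.sup fun p => max p.1.natAbs p.2.natAbs)
    with hrdef
  have hr : ∀ P ∈ F, ∀ p ∈ P.supp, p.1.natAbs ≤ r ∧ p.2.natAbs ≤ r := by
    intro P hP p hp
    have h1 : (P.supp.sup fun p => max p.1.natAbs p.2.natAbs) ≤ r :=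
      Finset.le_sup (f := fun P : Pattern A' => P.supp.sup fun p => max p.1.natAbs p.2.natAbs)
        (hFfin.mem_toFinset.mpr hP)
    have h2 : max p.1.natAbs p.2.natAbs ≤ P.supp.sup fun p => max p.1.natAbs p.2.natAbs :=
      Finset.le_sup (f := fun p : Cell => max p.1.natAbs p.2.natAbs) hp
    exact ⟨le_trans (le_trans (le_max_left _ _) h2) h1,
      le_trans (le_trans (le_max_right _ _) h2) h1⟩
  set c : ℕ := Fintype.card A' with hcdef
  set t : ℕ := 2 * r + 1 with htdef
  set n : ℕ := (c + 2) ^ (4 * t) with hndef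
  have hn1 : 1 ≤ n := Nat.one_le_pow _ _ (by omega)
  -- covers of the diagonal configurations
  have hmem : ∀ f : Fin n → Fin n, Xcfg n f f ∈ (fun y => π ∘ y) '' (shiftOf F) := by
    intro f; rw [← himg]; exact Xcfg_mem n f
  choose y hy hyπ using hmem
  -- the annulus restriction map is injective
  have hinj : Function.Injective
      (fun f : Fin n → Fin n => fun a : (ann n t : Finset Cell) => y f (a : Cell)) := by
    intro f g hfg
    have hagree : ∀ p ∈ ann n t, y f p = y g p := fun p hp => congrFun hfg ⟨p, hp⟩
    have hzS : (fun p => if inBn n p then y g p else y f p) ∈ shiftOf F :=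
      swap_mem hr (hy f) (hy g) hagree
    have hπz : (fun q => π ∘ q) (fun p => if inBn n p then y g p else y f p) = Xcfg n f g := by
      funext p
      by_cases hp : inBn n p
      · have h1 : π ((fun p => if inBn n p then y g p else y f p) p) = (π ∘ y g) p := by
          simp only [if_pos hp]; rfl
        calc π (if inBn n p then y g p else y f p) = (π ∘ y g) p := h1
          _ = Xcfg n g g p := congrFun (hyπ g) p
          _ = Xcfg n f g p := Xcfg_eq_inB g f g hp
      · have h1 : π ((fun p => if inBn n p then y g p else y f p) p) = (π ∘ y f) p := by
          simp only [if_neg hp]; rfl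
        calc π (if inBn n p then y g p else y f p) = (π ∘ y f) p := h1
          _ = Xcfg n f f p := congrFun (hyπ f) p
          _ = Xcfg n f g p := Xcfg_eq_outB f f g hp
    have hXmem : Xcfg n f g ∈ semiMirrorShift := by
      rw [himg]
      exact ⟨_, hzS, hπz⟩
    exact Xcfg_mem_eq hXmem
  -- counting
  have hcard := Fintype.card_le_of_injective _ hinj
  rw [Fintype.card_fun, Fintype.card_fun, Fintype.card_fin, Fintype.card_coe,
    ← hcdef] at hcard
  -- hcard : n ^ n ≤ c ^ (ann n t).card
  have hc1 : 1 ≤ c := Fintype.card_pos_iff.mpr ⟨y (fun i => i) ((0 : ℤ), (0 : ℤ))⟩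
  have h2 : c ^ (ann n t).card ≤ c ^ (4 * (t * n)) :=
    Nat.pow_le_pow_right hc1 (ann_card n t)
  have htn : t * n ≠ 0 := Nat.mul_ne_zero (by omega) (by omega)
  have h3 : c ^ (4 * (t * n)) < (c + 2) ^ (4 * (t * n)) :=
    Nat.pow_lt_pow_left (by omega) (by omega)
  have h4 : n ^ n = (c + 2) ^ (4 * (t * n)) := by
    calc n ^ n = ((c + 2) ^ (4 * t)) ^ n := by rw [hndef]
      _ = (c + 2) ^ (4 * t * n) := (pow_mul _ _ _).symm
      _ = _ := by rw [Nat.mul_assoc]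
  omega
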